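/- arXiv:1308.5352 — 3 statements merged into one kernel-verified Lean document; each statement's English description precedes it below -/
import Mathlib

section
/- For every m ≥ 1 and M = 2^⌈m/512⌉ there exists a sequence of m bipartitions (A_i, B_i), i = 1,...,m, of {1,...,M} such that |A_i| = |B_i| = M/2 for all i, and for every pair of distinct elements t, t' ∈ {1,...,M} there are at most (1/2 + 1/16)·m = 9m/16 indices i for which t and t' lie in the same part of (A_i, B_i). -/
/-!
Identify `Fin M` with `𝔽₂ⁿ`, `n = ⌈m/512⌉`, and take for `A i` the hyperplane `{v | v ⬝ᵥ x i = 0}`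
of a nonzero `x i`. Each hyperplane is half of the space, and `t, t'` lie on the same side of the
`i`-th cut iff `x i ⬝ᵥ (t + t') = 0`, so it suffices that no `d ≠ 0` is orthogonal to more than
`9m/16` of the `x i`. For a uniformly random `x`, Markov's inequality for the product weight
`∏ i, (if x i ⬝ᵥ d = 0 then 4 else 3)`, of mean `(7/2)^m`, bounds the probability that a fixed `d`
is orthogonal to at least `T > 9m/16` of them by `(7/2)^m / (4^T 3^(m-T))`, and a union bound over
the `2^n - 1` nonzero `d` leaves a good `x` as soon as `m ≥ 256 n`, which holds for `n ≥ 2`;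
zero entries of `x` can then be replaced by any nonzero vector, since `0` is orthogonal to every `d`.
For `n = 1` any nonzero `x i` works.
-/

open Finset

namespace BalancedBipartition

lemma pow_mul_pow_sub_le_of_le {a b : ℕ} (hba : b ≤ a) {q p N : ℕ} (hqp : q ≤ p) (hpN : p ≤ N) :
    a ^ q * b ^ (N - q) ≤ a ^ p * b ^ (N - p) := by
  obtain ⟨k, rfl⟩ := Nat.exists_eq_add_of_le hqp
  calc a ^ q * b ^ (N - q) = a ^ q * b ^ k * b ^ (N - (q + k)) := by
        rw [mul_assoc, ← pow_add]; congr 2; omega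
    _ ≤ a ^ q * a ^ k * b ^ (N - (q + k)) := by gcongr
    _ = a ^ (q + k) * b ^ (N - (q + k)) := by rw [pow_add]

/-- Markov's inequality for the weight `∏ i, (if p (x i) then a else b)`. -/
lemma card_filter_le_card_filter_mul_pow_le {α : Type*} [Fintype α] (p : α → Prop) [DecidablePred p]
    {a b : ℕ} (hba : b ≤ a) (m T : ℕ) :
    #{x : Fin m → α | T ≤ #{i | p (x i)}} * (a ^ T * b ^ (m - T)) ≤
      (a * #{v | p v} + b * #{v | ¬p v}) ^ m := by
  set w : α → ℕ := fun v => if p v then a else b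
  have hprod (x : Fin m → α) :
      ∏ i, w (x i) = a ^ #{i | p (x i)} * b ^ (m - #{i | p (x i)}) := by
    rw [prod_ite, prod_const, prod_const, filter_not, card_sdiff_of_subset (filter_subset _ _),
      card_univ, Fintype.card_fin]
  calc #{x : Fin m → α | T ≤ #{i | p (x i)}} * (a ^ T * b ^ (m - T))
      = ∑ _x ∈ {x : Fin m → α | T ≤ #{i | p (x i)}}, a ^ T * b ^ (m - T) := by
        rw [sum_const, smul_eq_mul]
    _ ≤ ∑ x ∈ {x : Fin m → α | T ≤ #{i | p (x i)}}, ∏ i, w (x i) := by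
        refine sum_le_sum fun x hx => ?_
        rw [hprod]
        exact pow_mul_pow_sub_le_of_le hba (mem_filter.1 hx).2
          ((card_filter_le _ _).trans_eq (card_fin m))
    _ ≤ ∑ x : Fin m → α, ∏ i, w (x i) := sum_le_univ_sum_of_nonneg fun _ => Nat.zero_le _
    _ = (∑ v, w v) ^ m := by rw [← Fintype.prod_sum, prod_const, card_fin]
    _ = (a * #{v | p v} + b * #{v | ¬p v}) ^ m := by
        rw [sum_ite, sum_const, sum_const, smul_eq_mul, smul_eq_mul, mul_comm a, mul_comm b]

lemma mul_natCeil_div_lt {α : Type*} [Field α] [LinearOrder α] [IsStrictOrderedRing α]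
    [FloorSemiring α] (m : ℕ) {k : ℕ} (hk : 0 < k) : k * ⌈(m : α) / k⌉₊ < m + k := by
  have hk' : (0 : α) < k := by exact_mod_cast hk
  have h := Nat.ceil_lt_add_one (div_nonneg (Nat.cast_nonneg m) hk'.le)
  rw [div_add_one hk'.ne', lt_div_iff₀ hk'] at h
  exact_mod_cast (mul_comm (k : α) _ ▸ h)

lemma exists_forall_notMem_of_sum_card_lt {ι β : Type*} [Fintype β] [DecidableEq β]
    (s : Finset ι) (B : ι → Finset β) (h : ∑ i ∈ s, #(B i) < Fintype.card β) :
    ∃ x, ∀ i ∈ s, x ∉ B i := by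
  obtain ⟨x, -, hx⟩ := exists_mem_notMem_of_card_lt_card (card_biUnion_le.trans_lt h)
  exact ⟨x, fun i hi hxi => hx (mem_biUnion.2 ⟨i, hi, hxi⟩)⟩

section Hyperplane

variable {ι : Type*} [Fintype ι]

lemma card_filter_dotProduct_ne_zero [DecidableEq ι] {d : ι → ZMod 2} (hd : d ≠ 0) :
    #{v | ¬v ⬝ᵥ d = 0} = #{v | v ⬝ᵥ d = 0} := by
  obtain ⟨j, hj⟩ := Function.ne_iff.1 hd
  have hdj : d j = 1 := by
    have hZMod2 : ∀ c : ZMod 2, c ≠ 0 → c = 1 := by decide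
    exact hZMod2 _ hj
  refine card_equiv (Equiv.addRight (Pi.single j 1)) fun v => ?_
  simp only [mem_filter, mem_univ, true_and, Equiv.coe_addRight, add_dotProduct, single_dotProduct,
    hdj, one_mul]
  generalize v ⬝ᵥ d = c
  revert c; decide

lemma two_mul_card_filter_dotProduct_eq_zero [DecidableEq ι] {d : ι → ZMod 2} (hd : d ≠ 0) :
    2 * #{v | v ⬝ᵥ d = 0} = 2 ^ Fintype.card ι := by
  rw [two_mul]
  nth_rw 2 [← card_filter_dotProduct_ne_zero hd]
  rw [card_filter_add_card_filter_not, card_univ, Fintype.card_fun, ZMod.card]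

lemma dotProduct_eq_zero_iff_iff_add_dotProduct_eq_zero (u v x : ι → ZMod 2) :
    (u ⬝ᵥ x = 0 ↔ v ⬝ᵥ x = 0) ↔ (u + v) ⬝ᵥ x = 0 := by
  rw [add_dotProduct]
  generalize u ⬝ᵥ x = a, v ⬝ᵥ x = b
  revert a b; decide

lemma exists_ne_zero_card_filter_dotProduct_le [Nonempty ι] {m : ℕ} (x : Fin m → ι → ZMod 2) :
    ∃ y : Fin m → ι → ZMod 2, (∀ i, y i ≠ 0) ∧
      ∀ d, #{i | y i ⬝ᵥ d = 0} ≤ #{i | x i ⬝ᵥ d = 0} := by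
  obtain ⟨v, hv⟩ := exists_ne (0 : ι → ZMod 2)
  refine ⟨fun i => if x i = 0 then v else x i, fun i => ?_, fun d => card_le_card fun i => ?_⟩
  · dsimp only
    split_ifs with h
    exacts [hv, h]
  · simp only [mem_filter, mem_univ, true_and]
    split_ifs with h
    · simp [h]
    · exact id

lemma exists_forall_card_filter_dotProduct_eq_zero_lt [DecidableEq ι] {m T : ℕ}
    (h : 2 ^ Fintype.card ι * 7 ^ m ≤ 2 ^ m * (4 ^ T * 3 ^ (m - T))) :
    ∃ x : Fin m → ι → ZMod 2, ∀ d ≠ 0, #{i | x i ⬝ᵥ d = 0} < T := by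
  set n := Fintype.card ι
  set W := 4 ^ T * 3 ^ (m - T)
  set bad : (ι → ZMod 2) → Finset (Fin m → ι → ZMod 2) := fun d => {x | T ≤ #{i | x i ⬝ᵥ d = 0}}
  have hbad (d : ι → ZMod 2) (hd : d ≠ 0) : 2 ^ m * (#(bad d) * W) ≤ 7 ^ m * (2 ^ n) ^ m := by
    have hMarkov := card_filter_le_card_filter_mul_pow_le (· ⬝ᵥ d = 0) (by norm_num : 3 ≤ 4) m T
    rw [card_filter_dotProduct_ne_zero hd] at hMarkov
    calc 2 ^ m * (#(bad d) * W) ≤ 2 ^ m * (4 * #{v | v ⬝ᵥ d = 0} + 3 * #{v | v ⬝ᵥ d = 0}) ^ m :=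
          Nat.mul_le_mul_left _ hMarkov
      _ = 7 ^ m * (2 * #{v | v ⬝ᵥ d = 0}) ^ m := by ring
      _ = 7 ^ m * (2 ^ n) ^ m := by rw [two_mul_card_filter_dotProduct_eq_zero hd]
  have hsum : 2 ^ m * W * ∑ d ∈ univ.erase 0, #(bad d) < 2 ^ m * W * (2 ^ n) ^ m :=
    calc 2 ^ m * W * ∑ d ∈ univ.erase 0, #(bad d)
        = ∑ d ∈ univ.erase 0, 2 ^ m * (#(bad d) * W) := by rw [mul_sum]; ring_nf
      _ ≤ ∑ _d ∈ univ.erase (0 : ι → ZMod 2), 7 ^ m * (2 ^ n) ^ m :=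
          sum_le_sum fun d hd => hbad d (ne_of_mem_erase hd)
      _ = (2 ^ n - 1) * (7 ^ m * (2 ^ n) ^ m) := by
          rw [sum_const, smul_eq_mul, card_erase_of_mem (mem_univ _), card_univ, Fintype.card_fun,
            ZMod.card]
      _ < 2 ^ n * 7 ^ m * (2 ^ n) ^ m := by
          rw [mul_assoc]
          exact Nat.mul_lt_mul_of_lt_of_le (Nat.sub_lt (by positivity) one_pos) le_rfl
            (by positivity)
      _ ≤ 2 ^ m * W * (2 ^ n) ^ m := Nat.mul_le_mul_right _ h
  obtain ⟨x, hx⟩ := exists_forall_notMem_of_sum_card_lt (univ.erase 0) bad <| by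
    rw [Fintype.card_fun, Fintype.card_fun, ZMod.card, Fintype.card_fin]
    exact Nat.lt_of_mul_lt_mul_left hsum
  exact ⟨x, fun d hd => not_le.1 fun hT => hx d (mem_erase.2 ⟨hd, mem_univ _⟩) (mem_filter.2
    ⟨mem_univ _, hT⟩)⟩

end Hyperplane

lemma two_pow_mul_seven_pow_le {n m T : ℕ} (hn : 256 * n ≤ m) (hT : 9 * m ≤ 16 * T)
    (hTm : T ≤ m) : 2 ^ n * 7 ^ m ≤ 2 ^ m * (4 ^ T * 3 ^ (m - T)) := by
  refine (Nat.pow_le_pow_iff_left (n := 512) (by norm_num)).1 ?_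
  have hbase : 4 * 7 ^ 512 ≤ 2 ^ 1088 * 3 ^ 224 := by decide +kernel
  calc (2 ^ n * 7 ^ m) ^ 512 = 2 ^ (512 * n) * 7 ^ (512 * m) := by
        rw [mul_pow, ← pow_mul, ← pow_mul, mul_comm n, mul_comm m]
    _ ≤ 2 ^ (2 * m) * 7 ^ (512 * m) :=
        Nat.mul_le_mul_right _ (Nat.pow_le_pow_right (by norm_num) (by omega))
    _ = (4 * 7 ^ 512) ^ m := by rw [mul_pow, pow_mul, pow_mul]; norm_num
    _ ≤ (2 ^ 1088 * 3 ^ 224) ^ m := Nat.pow_le_pow_left hbase m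
    _ = 2 ^ (512 * m) * (4 ^ (288 * m) * 3 ^ (512 * m - 288 * m)) := by
        rw [show (4 : ℕ) = 2 ^ 2 by norm_num, ← pow_mul, ← mul_assoc, ← pow_add,
          show 512 * m - 288 * m = 224 * m by omega, mul_pow, ← pow_mul, ← pow_mul]
        ring_nf
    _ ≤ 2 ^ (512 * m) * (4 ^ (512 * T) * 3 ^ (512 * m - 512 * T)) :=
        Nat.mul_le_mul_left _ (pow_mul_pow_sub_le_of_le (by norm_num) (by omega) (by omega))
    _ = (2 ^ m * (4 ^ T * 3 ^ (m - T))) ^ 512 := by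
        rw [mul_pow, mul_pow, ← pow_mul, ← pow_mul, ← pow_mul, mul_comm m, mul_comm T,
          show 512 * m - 512 * T = (m - T) * 512 by omega]

lemma exists_ne_zero_forall_card_filter_dotProduct_eq_zero_le {n m : ℕ} (hn : 1 ≤ n)
    (hnm : 512 * n ≤ m + 511) :
    ∃ x : Fin m → Fin n → ZMod 2, (∀ i, x i ≠ 0) ∧ ∀ d ≠ 0, 16 * #{i | x i ⬝ᵥ d = 0} ≤ 9 * m := by
  obtain rfl | hn2 := hn.eq_or_lt
  · refine ⟨fun _ _ => 1, fun _ h => one_ne_zero (congrFun h 0), fun d hd => ?_⟩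
    have hdot : ∀ d : Fin 1 → ZMod 2, d ≠ 0 → (fun _ => 1) ⬝ᵥ d ≠ 0 := by decide
    rw [filter_false_of_mem fun i _ => hdot d hd, card_empty]
    omega
  · have : NeZero n := ⟨by omega⟩
    obtain ⟨x, hx⟩ := exists_forall_card_filter_dotProduct_eq_zero_lt (ι := Fin n) (m := m)
      (T := 9 * m / 16 + 1)
      (by rw [Fintype.card_fin]; exact two_pow_mul_seven_pow_le (by omega) (by omega) (by omega))
    obtain ⟨y, hy0, hy⟩ := exists_ne_zero_card_filter_dotProduct_le x
    exact ⟨y, hy0, fun d hd => by have := (hy d).trans_lt (hx d hd); omega⟩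

end BalancedBipartition

open BalancedBipartition in
/-- For every `m ≥ 1` and `M = 2 ^ ⌈m/512⌉` there is a sequence of `m` bipartitions
`(A i, (A i)ᶜ)` of `Fin M`, each with parts of size `M/2`, such that every pair of
distinct elements `t ≠ t'` lies in the same part for at most `9m/16` indices `i`. -/
theorem stmt1 (m : ℕ) (hm : 1 ≤ m) (M : ℕ) (hM : M = 2 ^ ⌈(m : ℚ) / 512⌉₊) :
    ∃ A : Fin m → Finset (Fin M),
      (∀ i, (A i).card = M / 2 ∧ (A i)ᶜ.card = M / 2) ∧
      ∀ t t' : Fin M, t ≠ t' →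
        (((Finset.univ : Finset (Fin m)).filter
            (fun i => (t ∈ A i ↔ t' ∈ A i))).card : ℚ) ≤ (1 / 2 + 1 / 16) * m := by
  set n := ⌈(m : ℚ) / 512⌉₊
  have hn : 1 ≤ n := Nat.ceil_pos.2 (by positivity)
  have hnm : 512 * n < m + 512 := by
    exact_mod_cast mul_natCeil_div_lt (α := ℚ) m (k := 512) (by norm_num)
  obtain ⟨x, hx0, hx⟩ := exists_ne_zero_forall_card_filter_dotProduct_eq_zero_le (m := m) hn
    (by omega)
  let e : Fin M ≃ (Fin n → ZMod 2) := Fintype.equivOfCardEq (by simp [hM])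
  refine ⟨fun i => {t | e t ⬝ᵥ x i = 0}, fun i => ?_, fun t t' htt' => ?_⟩
  · have hcard : #{t | e t ⬝ᵥ x i = 0} = #{v | v ⬝ᵥ x i = 0} := card_equiv e (by simp)
    have hhalf := two_mul_card_filter_dotProduct_eq_zero (hx0 i)
    rw [Fintype.card_fin, ← hM, ← hcard] at hhalf
    simp only [card_compl, Fintype.card_fin]
    omega
  · have hd : e t + e t' ≠ 0 := fun h => htt' (e.injective (by
      rwa [add_eq_zero_iff_eq_neg, ZModModule.neg_eq_self] at h))
    have hcount := hx _ hd
    simp_rw [mem_filter, mem_univ, true_and, dotProduct_eq_zero_iff_iff_add_dotProduct_eq_zero,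
      dotProduct_comm _ (x _)]
    have : (16 : ℚ) * #{i | x i ⬝ᵥ (e t + e t') = 0} ≤ 9 * m := by exact_mod_cast hcount
    linarith
end

section
/- Let (A_i, B_i)_{i=1}^m be a (1/4)-balanced sequence of bipartitions of {1,...,M}, and let λ_1,...,λ_M be nonnegative reals with ∑_t λ_t = 1 and max_t λ_t ≤ 1 - 8ζ for some ζ > 0. Then there exists an index i such that min(∑_{t∈A_i} λ_t, ∑_{t∈B_i} λ_t) ≥ ζ. -/
/-!
Encode the `i`-th bipartition as the sign vector `σ_i(t) = ±1`, so that
`D_i = ∑_t σ_i(t) λ_t = λ(A_i) - λ(B_i)`. The correlations `∑_i σ_i(t) σ_i(t')` equal `m` on the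
diagonal and are at most `2cm` off it (this is `c`-balancedness), so the mean of `D_i²` is at
most `2c (∑ λ)² + (1 - 2c) ∑ λ_t²`. For `c = 1/4`, using `∑ λ_t² ≤ max λ_t ≤ 1 - 8ζ`, this is
at most `1 - 4ζ`. For an `i` with `D_i² ≤ 1 - 4ζ`, the identity `D_i² = 1 - 4 λ(A_i) λ(B_i)`
forces both parts to have weight at least `ζ`.
-/

open Finset

section

variable {α ι : Type*}

theorem sum_sq_sum_mul_eq [Fintype α] [Fintype ι] (x : ι → α → ℝ) (l : α → ℝ) :
    ∑ i, (∑ t, x i t * l t) ^ 2 = ∑ t, ∑ t', l t * l t' * ∑ i, x i t * x i t' := by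
  simp_rw [sq, sum_mul_sum, mul_sum]
  rw [sum_comm]
  refine sum_congr rfl fun t _ => ?_
  rw [sum_comm]
  refine sum_congr rfl fun t' _ => sum_congr rfl fun i _ => by ring

theorem sum_sum_mul_le_of_offDiag_le [Fintype α] {l : α → ℝ}
    (hl : ∀ t, 0 ≤ l t) {C : α → α → ℝ} {a b : ℝ} (hdiag : ∀ t, C t t ≤ a + b)
    (hoff : ∀ t t', t ≠ t' → C t t' ≤ a) :
    ∑ t, ∑ t', l t * l t' * C t t' ≤ a * (∑ t, l t) ^ 2 + b * ∑ t, l t ^ 2 := by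
  classical
  calc ∑ t, ∑ t', l t * l t' * C t t'
      ≤ ∑ t, ∑ t', l t * l t' * (a + if t = t' then b else 0) := by
        gcongr with t _ t' _
        · exact mul_nonneg (hl t) (hl t')
        · split_ifs with h
          · exact h ▸ hdiag t
          · simpa using hoff t t' h
    _ = a * (∑ t, l t) ^ 2 + b * ∑ t, l t ^ 2 := by
        simp_rw [mul_add, sum_add_distrib, mul_ite, mul_zero, sum_ite_eq, mem_univ, if_true,
          sq, sum_mul_sum, mul_sum]
        congr 1
        · exact sum_congr rfl fun t _ => sum_congr rfl fun t' _ => by ring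
        · exact sum_congr rfl fun t _ => by ring

end

section

variable {α ι : Type*} [DecidableEq α]

def partSign (s : Finset α) (t : α) : ℝ := if t ∈ s then 1 else -1

theorem sum_partSign_mul [Fintype α] (s : Finset α) (l : α → ℝ) :
    ∑ t, partSign s t * l t = ∑ t ∈ s, l t - ∑ t ∈ sᶜ, l t := by
  rw [← sum_add_sum_compl s, sub_eq_add_neg, ← sum_neg_distrib]
  congr 1 <;> refine sum_congr rfl fun t ht => ?_
  · simp [partSign, ht]
  · simp [partSign, mem_compl.mp ht]

theorem partSign_mul_partSign (s : Finset α) (t t' : α) :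
    partSign s t * partSign s t' = 2 * (if (t ∈ s ↔ t' ∈ s) then 1 else 0) - 1 := by
  unfold partSign
  by_cases ht : t ∈ s <;> by_cases ht' : t' ∈ s <;> simp [ht, ht'] <;> norm_num

theorem sum_partSign_mul_partSign [Fintype ι] (A : ι → Finset α) (t t' : α) :
    ∑ i, partSign (A i) t * partSign (A i) t' =
      2 * (#{i | t ∈ A i ↔ t' ∈ A i} : ℝ) - Fintype.card ι := by
  simp_rw [partSign_mul_partSign, sum_sub_distrib, ← mul_sum, sum_boole]
  simp

theorem sum_sq_sum_partSign_mul_le [Fintype α] [Fintype ι]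
    (A : ι → Finset α) {c : ℝ}
    (hbal : ∀ t t', t ≠ t' → (#{i | t ∈ A i ↔ t' ∈ A i} : ℝ) ≤ (1 / 2 + c) * Fintype.card ι)
    {l : α → ℝ} (hl : ∀ t, 0 ≤ l t) :
    ∑ i, (∑ t, partSign (A i) t * l t) ^ 2 ≤
      2 * c * Fintype.card ι * (∑ t, l t) ^ 2 + (1 - 2 * c) * Fintype.card ι * ∑ t, l t ^ 2 := by
  rw [sum_sq_sum_mul_eq]
  refine sum_sum_mul_le_of_offDiag_le hl (fun t => ?_) (fun t t' h => ?_)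
  · rw [sum_partSign_mul_partSign, filter_true_of_mem fun i _ => Iff.rfl, card_univ]
    linarith
  · rw [sum_partSign_mul_partSign]
    linarith [hbal t t' h]

end

theorem le_min_of_sub_sq_le {S T ζ : ℝ} (hST : S + T = 1) (h : (S - T) ^ 2 ≤ 1 - 4 * ζ) :
    ζ ≤ min S T := by
  refine le_min ?_ ?_ <;> nlinarith [sq_nonneg S, sq_nonneg T]

theorem stmt4_general (m M : ℕ) (hm : 0 < m) (A : Fin m → Finset (Fin M))
    (hbal : ∀ t t' : Fin M, t ≠ t' →
      (((Finset.univ : Finset (Fin m)).filter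
          (fun i => (t ∈ A i ↔ t' ∈ A i))).card : ℝ) ≤ (1 / 2 + 1 / 4) * m)
    (l : Fin M → ℝ) (ζ : ℝ) (hnn : ∀ t, 0 ≤ l t)
    (hsum : ∑ t, l t = 1) (hmax : ∀ t, l t ≤ 1 - 8 * ζ) :
    ∃ i, ζ ≤ min (∑ t ∈ A i, l t) (∑ t ∈ (A i)ᶜ, l t) := by
  have hsq : ∑ t, l t ^ 2 ≤ 1 - 8 * ζ :=
    calc ∑ t, l t ^ 2 ≤ ∑ t, (1 - 8 * ζ) * l t :=
          sum_le_sum fun t _ => by rw [sq]; exact mul_le_mul_of_nonneg_right (hmax t) (hnn t)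
      _ = 1 - 8 * ζ := by rw [← mul_sum, hsum, mul_one]
  have hmoment : ∑ i, (∑ t, partSign (A i) t * l t) ^ 2 ≤ ∑ _i : Fin m, (1 - 4 * ζ) := by
    calc ∑ i, (∑ t, partSign (A i) t * l t) ^ 2
        ≤ 2 * (1 / 4) * m * (∑ t, l t) ^ 2 + (1 - 2 * (1 / 4)) * m * ∑ t, l t ^ 2 := by
          simpa using sum_sq_sum_partSign_mul_le A (by simpa using hbal) hnn
      _ ≤ ∑ _i : Fin m, (1 - 4 * ζ) := by
          rw [hsum, sum_const, card_univ, Fintype.card_fin, nsmul_eq_mul]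
          nlinarith [(Nat.cast_nonneg m : (0 : ℝ) ≤ m)]
  obtain ⟨i, -, hi⟩ := exists_le_of_sum_le (univ_nonempty_iff.2 ⟨⟨0, hm⟩⟩) hmoment
  exact ⟨i, le_min_of_sub_sq_le ((sum_add_sum_compl _ _).trans hsum) (sum_partSign_mul (A i) l ▸ hi)⟩

open Finset in
/-- If `(A i, (A i)ᶜ)`, `i = 1, ..., m`, is a `(1/4)`-balanced sequence of bipartitions
of `Fin M` and `λ_1, ..., λ_M` are nonnegative reals with `∑ λ_t = 1` and each
`λ_t ≤ 1 - 8ζ` for some `ζ > 0`, then some bipartition satisfies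
`min(∑_{t ∈ A_i} λ_t, ∑_{t ∈ B_i} λ_t) ≥ ζ`. -/
theorem stmt4 (m M : ℕ) (hm : 0 < m) (A : Fin m → Finset (Fin M))
    (hsize : ∀ i, (A i).card * 2 = M ∧ (A i)ᶜ.card * 2 = M)
    (hbal : ∀ t t' : Fin M, t ≠ t' →
      (((Finset.univ : Finset (Fin m)).filter
          (fun i => (t ∈ A i ↔ t' ∈ A i))).card : ℝ) ≤ (1 / 2 + 1 / 4) * m)
    (l : Fin M → ℝ) (ζ : ℝ) (hζ : 0 < ζ) (hnn : ∀ t, 0 ≤ l t)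
    (hsum : ∑ t, l t = 1) (hmax : ∀ t, l t ≤ 1 - 8 * ζ) :
    ∃ i, ζ ≤ min (∑ t ∈ A i, l t) (∑ t ∈ (A i)ᶜ, l t) :=
  stmt4_general m M hm A hbal l ζ hnn hsum hmax
end

section
/- Let (A_i, B_i)_{i=1}^m be a (1/16)-balanced sequence of bipartitions of {1,...,M}, and let λ_1,...,λ_M be nonnegative reals with ∑_t λ_t = 1 and max_t λ_t ≤ 1 - 8ζ for some ζ > 0. Then at least m/6 of the bipartitions satisfy min(∑_{t∈A_i} λ_t, ∑_{t∈B_i} λ_t) ≥ ζ. -/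
open Finset in
/-- If `(A i, (A i)ᶜ)`, `i = 1, ..., m`, is a `(1/16)`-balanced sequence of
bipartitions of `Fin M` and `λ_1, ..., λ_M` are nonnegative reals with `∑ λ_t = 1`
and each `λ_t ≤ 1 - 8ζ` for some `ζ > 0`, then at least `m/6` of the bipartitions
satisfy `min(∑_{t ∈ A_i} λ_t, ∑_{t ∈ B_i} λ_t) ≥ ζ`. -/
theorem stmt6 (m M : ℕ) (A : Fin m → Finset (Fin M))
    (hsize : ∀ i, (A i).card * 2 = M ∧ (A i)ᶜ.card * 2 = M)
    (hbal : ∀ t t' : Fin M, t ≠ t' →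
      (((Finset.univ : Finset (Fin m)).filter
          (fun i => (t ∈ A i ↔ t' ∈ A i))).card : ℝ) ≤ (1 / 2 + 1 / 16) * m)
    (l : Fin M → ℝ) (ζ : ℝ) (hζ : 0 < ζ) (hnn : ∀ t, 0 ≤ l t)
    (hsum : ∑ t, l t = 1) (hmax : ∀ t, l t ≤ 1 - 8 * ζ) :
    (m : ℝ) / 6 ≤ (((Finset.univ : Finset (Fin m)).filter
        (fun i => ζ ≤ min (∑ t ∈ A i, l t) (∑ t ∈ (A i)ᶜ, l t))).card : ℝ) := by
  classical
  have hM : (Finset.univ : Finset (Fin M)).Nonempty := by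
    by_contra h
    rw [Finset.not_nonempty_iff_eq_empty] at h
    rw [h, Finset.sum_empty] at hsum; norm_num at hsum
  obtain ⟨ts, -, hts⟩ := Finset.exists_max_image Finset.univ l hM
  have hζ8 : ζ ≤ 1/8 := by have h1 := hmax ts; have h2 := hnn ts; linarith
  set G := (Finset.univ : Finset (Fin m)).filter
      (fun i => ζ ≤ min (∑ t ∈ A i, l t) (∑ t ∈ (A i)ᶜ, l t)) with hG
  by_cases hcase : ∃ t', t' ≠ ts ∧ ζ ≤ l t'
  · -- two heavy elements; use pairwise balance directly
    obtain ⟨t', ht', hlt'⟩ := hcase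
    have hlts : ζ ≤ l ts := le_trans hlt' (hts t' (mem_univ t'))
    have hsub : (Finset.univ.filter (fun i => ¬ (ts ∈ A i ↔ t' ∈ A i))) ⊆ G := by
      intro i hi
      simp only [mem_filter, mem_univ, true_and] at hi
      simp only [hG, mem_filter, mem_univ, true_and]
      by_cases h1 : ts ∈ A i
      · have h2 : t' ∉ A i := fun h => hi ⟨fun _ => h, fun _ => h1⟩
        have hA : ζ ≤ ∑ t ∈ A i, l t :=
          le_trans hlts (Finset.single_le_sum (fun t _ => hnn t) h1)
        have hB : ζ ≤ ∑ t ∈ (A i)ᶜ, l t :=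
          le_trans hlt' (Finset.single_le_sum (fun t _ => hnn t) (Finset.mem_compl.2 h2))
        exact le_min hA hB
      · have h2 : t' ∈ A i := by
          by_contra h2
          exact hi ⟨fun h => absurd h h1, fun h => absurd h h2⟩
        have hA : ζ ≤ ∑ t ∈ A i, l t :=
          le_trans hlt' (Finset.single_le_sum (fun t _ => hnn t) h2)
        have hB : ζ ≤ ∑ t ∈ (A i)ᶜ, l t :=
          le_trans hlts (Finset.single_le_sum (fun t _ => hnn t) (Finset.mem_compl.2 h1))
        exact le_min hA hB
    have hcards : (Finset.univ.filter (fun i => (ts ∈ A i ↔ t' ∈ A i))).card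
        + (Finset.univ.filter (fun i => ¬ (ts ∈ A i ↔ t' ∈ A i))).card = m := by
      rw [Finset.card_filter_add_card_filter_not]
      simp
    have hb := hbal ts t' (Ne.symm ht')
    have hle : (Finset.univ.filter (fun i => ¬ (ts ∈ A i ↔ t' ∈ A i))).card ≤ G.card :=
      Finset.card_le_card hsub
    have hcast : ((Finset.univ.filter (fun i => (ts ∈ A i ↔ t' ∈ A i))).card : ℝ)
        + ((Finset.univ.filter (fun i => ¬ (ts ∈ A i ↔ t' ∈ A i))).card : ℝ) = m := by
      exact_mod_cast hcards
    have hle' : ((Finset.univ.filter (fun i => ¬ (ts ∈ A i ↔ t' ∈ A i))).card : ℝ)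
        ≤ (G.card : ℝ) := by exact_mod_cast hle
    linarith
  · -- all other elements light; second moment argument
    push_neg at hcase
    -- hcase : ∀ t', t' ≠ ts → l t' < ζ
    set W : ℝ := 1 - l ts with hWdef
    have hW8 : 8*ζ ≤ W := by have := hmax ts; simp only [hWdef]; linarith
    have hW0 : (0:ℝ) < W := by linarith
    set μ : Fin M → ℝ := fun t => if t = ts then 0 else l t / W with hmu
    have hμnn : ∀ t, 0 ≤ μ t := by
      intro t
      by_cases h : t = ts
      · simp [hmu, h]
      · simp only [hmu, h, if_false]
        exact div_nonneg (hnn t) hW0.le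
    have hμ8 : ∀ t, μ t ≤ 1/8 := by
      intro t
      by_cases h : t = ts
      · simp [hmu, h]
      · simp only [hmu, h, if_false]
        rw [div_le_iff₀ hW0]
        have := hcase t h
        nlinarith
    have hμW : ∀ t, μ t * W ≤ l t := by
      intro t
      by_cases h : t = ts
      · simp [hmu, h]; exact hnn ts
      · simp only [hmu, h, if_false]
        rw [div_mul_cancel₀ _ hW0.ne']
    have hμsum : ∑ t, μ t = 1 := by
      have h1 : ∑ t, (if t = ts then (0:ℝ) else l t) = W := by
        have heq : ∀ t, (if t = ts then (0:ℝ) else l t)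
            = l t - (if t = ts then l t else 0) := by
          intro t; by_cases h : t = ts <;> simp [h]
        rw [Finset.sum_congr rfl (fun t _ => heq t), Finset.sum_sub_distrib,
          Finset.sum_ite_eq' Finset.univ ts l, hsum]
        simp [hWdef]
      have h2 : ∑ t, μ t = (∑ t, (if t = ts then (0:ℝ) else l t)) / W := by
        rw [Finset.sum_div]
        refine Finset.sum_congr rfl fun t _ => ?_
        by_cases h : t = ts <;> simp [hmu, h]
      rw [h2, h1, div_self hW0.ne']
    have hμsq : ∑ t, (μ t)^2 ≤ 1/8 := by
      calc ∑ t, (μ t)^2 ≤ ∑ t, (1/8) * μ t := by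
            refine Finset.sum_le_sum fun t _ => ?_
            have h1 := hμnn t; have h2 := hμ8 t; nlinarith
        _ = 1/8 := by rw [← Finset.mul_sum, hμsum]; ring
    set e : Fin m → Fin M → ℝ := fun i t => if t ∈ A i then 1 else -1 with he
    have hσd : ∀ t, ∑ i, e i t * e i t = m := by
      intro t
      have h1 : ∀ i, e i t * e i t = 1 := by
        intro i; by_cases h : t ∈ A i <;> simp [he, h]
      simp [h1]
    have hσ : ∀ t t', t ≠ t' → ∑ i, e i t * e i t' ≤ (m:ℝ)/8 := by
      intro t t' h
      have hb := hbal t t' h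
      have hee : ∀ i, e i t * e i t' = 2 * (if (t ∈ A i ↔ t' ∈ A i) then (1:ℝ) else 0) - 1 := by
        intro i
        by_cases h1 : t ∈ A i <;> by_cases h2 : t' ∈ A i <;> simp [he, h1, h2] <;> norm_num
      rw [Finset.sum_congr rfl fun i _ => hee i, Finset.sum_sub_distrib, ← Finset.mul_sum,
        Finset.sum_boole]
      simp only [Finset.sum_const, Finset.card_univ, Fintype.card_fin, nsmul_eq_mul, mul_one]
      linarith
    set T : Fin m → ℝ := fun i => ∑ t ∈ A i, μ t with hT
    have hTf : ∀ i, 2 * T i - 1 = ∑ t, μ t * e i t := by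
      intro i
      have hsplit := Finset.sum_add_sum_compl (A i) (fun t => μ t * e i t)
      have h1 : ∑ t ∈ A i, μ t * e i t = T i := by
        refine Finset.sum_congr rfl fun t ht => ?_
        simp [he, ht]
      have h2 : ∑ t ∈ (A i)ᶜ, μ t * e i t = -∑ t ∈ (A i)ᶜ, μ t := by
        rw [← Finset.sum_neg_distrib]
        refine Finset.sum_congr rfl fun t ht => ?_
        rw [Finset.mem_compl] at ht
        simp [he, ht]
      have h3 := Finset.sum_add_sum_compl (A i) μ
      rw [hμsum] at h3
      rw [h1, h2] at hsplit
      rw [← hsplit]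
      linarith
    -- second moment bound
    have hQ : ∑ i, (2 * T i - 1)^2 ≤ (m:ℝ)/4 := by
      have expand : ∑ i, (2 * T i - 1)^2
          = ∑ t, ∑ t', (μ t * μ t') * (∑ i, e i t * e i t') := by
        have h1 : ∀ i : Fin m, (2 * T i - 1)^2 = ∑ t, ∑ t', (μ t * e i t) * (μ t' * e i t') := by
          intro i
          rw [hTf i, sq, Finset.sum_mul_sum]
        rw [Finset.sum_congr rfl fun i _ => h1 i, Finset.sum_comm]
        refine Finset.sum_congr rfl fun t _ => ?_
        rw [Finset.sum_comm]
        refine Finset.sum_congr rfl fun t' _ => ?_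
        rw [Finset.mul_sum]
        refine Finset.sum_congr rfl fun i _ => ?_
        ring
      rw [expand]
      have hstep : ∑ t, ∑ t', (μ t * μ t') * (∑ i, e i t * e i t')
          ≤ ∑ t, ∑ t', (μ t * μ t') * ((m:ℝ)/8 + (if t = t' then (7/8)*(m:ℝ) else 0)) := by
        refine Finset.sum_le_sum fun t _ => Finset.sum_le_sum fun t' _ => ?_
        by_cases h : t = t'
        · subst h
          rw [hσd, if_pos rfl]
          have hmm : (m:ℝ)/8 + 7/8*(m:ℝ) = m := by ring
          rw [hmm]
        · rw [if_neg h, add_zero]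
          exact mul_le_mul_of_nonneg_left (hσ t t' h) (mul_nonneg (hμnn t) (hμnn t'))
      refine le_trans hstep ?_
      have p0 : ∑ t, ∑ t', (μ t * μ t') = 1 := by
        rw [← Finset.sum_mul_sum, hμsum]; norm_num
      have split : ∑ t, ∑ t', (μ t * μ t') * ((m:ℝ)/8 + (if t = t' then (7/8)*(m:ℝ) else 0))
          = (∑ t, ∑ t', (μ t * μ t')) * ((m:ℝ)/8) + (∑ t, (μ t)^2) * ((7/8)*(m:ℝ)) := by
        simp_rw [mul_add, Finset.sum_add_distrib]
        congr 1
        · rw [Finset.sum_mul]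
          refine Finset.sum_congr rfl fun t _ => ?_
          rw [Finset.sum_mul]
        · rw [Finset.sum_mul]
          refine Finset.sum_congr rfl fun t _ => ?_
          have hthis : ∀ t' : Fin M, (μ t * μ t') * (if t = t' then (7/8)*(m:ℝ) else 0)
              = if t = t' then (μ t * μ t') * ((7/8)*(m:ℝ)) else 0 := by
            intro t'; by_cases h : t = t' <;> simp [h]
          rw [Finset.sum_congr rfl fun t' _ => hthis t',
            Finset.sum_ite_eq Finset.univ t (fun t' => (μ t * μ t') * ((7/8)*(m:ℝ)))]
          simp [sq]
      rw [split, p0]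
      have hm0 : (0:ℝ) ≤ m := Nat.cast_nonneg m
      nlinarith
    -- bad indices have big deviation
    have hbad : ∀ i : Fin m, i ∉ G → (9:ℝ)/16 ≤ (2 * T i - 1)^2 := by
      intro i hi
      simp only [hG, mem_filter, mem_univ, true_and, not_le] at hi
      have hT0 : 0 ≤ T i := Finset.sum_nonneg fun t _ => hμnn t
      have h3 := Finset.sum_add_sum_compl (A i) μ
      rw [hμsum] at h3
      rcases min_lt_iff.1 hi with h | h
      · have h1 : T i * W ≤ ∑ t ∈ A i, l t := by
          rw [hT, Finset.sum_mul]
          exact Finset.sum_le_sum fun t _ => hμW t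
        have hT8 : T i ≤ 1/8 := by nlinarith
        nlinarith [mul_nonneg (by linarith : (0:ℝ) ≤ 1/8 - T i)
          (by linarith : (0:ℝ) ≤ 7/8 - T i)]
      · have h1 : (1 - T i) * W ≤ ∑ t ∈ (A i)ᶜ, l t := by
          have h4 : 1 - T i = ∑ t ∈ (A i)ᶜ, μ t := by simp only [hT]; linarith
          rw [h4, Finset.sum_mul]
          exact Finset.sum_le_sum fun t _ => hμW t
        have hT8 : 7/8 ≤ T i := by nlinarith
        nlinarith [mul_nonneg (by linarith : (0:ℝ) ≤ T i - 7/8)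
          (by linarith : (0:ℝ) ≤ T i - 1/8)]
    -- assemble
    have hGsub : G ⊆ Finset.univ := Finset.subset_univ G
    have hGm : G.card ≤ m := by
      have := Finset.card_le_card hGsub
      simpa using this
    have hcard : ((Finset.univ \ G).card : ℝ) = m - G.card := by
      rw [Finset.card_sdiff_of_subset hGsub, Finset.card_univ, Fintype.card_fin, Nat.cast_sub hGm]
    have hchain : ((Finset.univ \ G).card : ℝ) * (9/16) ≤ (m:ℝ)/4 := by
      calc ((Finset.univ \ G).card : ℝ) * (9/16) = ∑ _i ∈ Finset.univ \ G, (9:ℝ)/16 := by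
            rw [Finset.sum_const, nsmul_eq_mul]
        _ ≤ ∑ i ∈ Finset.univ \ G, (2 * T i - 1)^2 := by
            refine Finset.sum_le_sum fun i hi => ?_
            exact hbad i (Finset.mem_sdiff.1 hi).2
        _ ≤ ∑ i, (2 * T i - 1)^2 := by
            refine Finset.sum_le_sum_of_subset_of_nonneg Finset.sdiff_subset ?_
            intro i _ _; positivity
        _ ≤ (m:ℝ)/4 := hQ
    rw [hcard] at hchain
    linarith
end
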